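/- arXiv:0706.0248 — 3 statements merged into one kernel-verified Lean document; each statement's English description precedes it below -/
import Mathlib

section
/- Let S be a finite semigroup. The set of transformations F of S^* that are length-preserving, act within Š coordinatewise in the sense of the wreath recursion, and satisfy: whenever F(x_n,…,x_1) = (y_n,…,y_1) with x_{n-1} R y_{n-1} and x_n R y_n, there exists s ∈ S^1 with x_{n-1}s = y_{n-1} and x_n s = y_n — forms a self-similar submonoid of the infinite iterated wreath product: it is closed under composition, contains the identity, and is closed under taking states (sections) _a F for a ∈ S^*. -/
open Pointwise

/-- Multiplication of an element of a semigroup `M` by an element of `M¹ = M` with an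
adjoined identity (modelled as `Option M`, `none` being the identity `I`). -/
def hmul {M : Type*} [Mul M] (h : M) : Option M → M := fun s => s.elim h (fun u => h * u)

/-- Multiplication in `M¹` (modelled as `Option M`). -/
def omul {M : Type*} [Mul M] : Option M → Option M → Option M
  | none, t => t
  | some a, none => some a
  | some a, some b => some (a * b)

/-- `mpow a n = aⁿ` for `n ≥ 1` (with the junk value `mpow a 0 = a`). -/
def mpow {M : Type*} [Mul M] (a : M) : ℕ → M
  | 0 => a
  | 1 => a
  | n+2 => mpow a (n+1) * a

/-- Green's preorder `a ≤_L b` iff `a ∈ M¹ b`. -/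
def leL {M : Type*} [Mul M] (a b : M) : Prop := a = b ∨ ∃ u, a = u * b
/-- Green's preorder `a ≤_R b` iff `a ∈ b M¹`. -/
def leR {M : Type*} [Mul M] (a b : M) : Prop := a = b ∨ ∃ u, a = b * u
/-- Green's `L`-equivalence. -/
def eqL {M : Type*} [Mul M] (a b : M) : Prop := leL a b ∧ leL b a
/-- Green's `R`-equivalence. -/
def eqR {M : Type*} [Mul M] (a b : M) : Prop := leR a b ∧ leR b a
/-- Green's `H`-equivalence. -/
def eqH {M : Type*} [Mul M] (a b : M) : Prop := eqL a b ∧ eqR a b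
/-- `a <_H b` : `a ≤_L b`, `a ≤_R b`, but `a` is not `H`-equivalent to `b`. -/
def ltH {M : Type*} [Mul M] (a b : M) : Prop := leL a b ∧ leR a b ∧ ¬ eqH a b

/-- The `H`-class of `a`, as a type. -/
def HclsT {M : Type*} [Mul M] (a : M) := {x : M // eqH x a}

/-- The (right) Schützenberger group of the `H`-class of `a`: the set of transformations of the
`H`-class of `a` induced by right multiplication by elements of the right stabilizer in `M¹`. -/
def gammaR {M : Type*} [Mul M] (a : M) : Set (HclsT a → HclsT a) :=
  {f | ∃ s : Option M, (∀ h : HclsT a, eqH (hmul h.1 s) a) ∧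
        ∀ h : HclsT a, (f h).1 = hmul h.1 s}

/-- An element is `π'`-free if the Schützenberger group of its (`J`-class, equivalently its)
`H`-class is a `π`-group: every prime dividing its order lies in `π`. -/
def piFree {M : Type*} [Mul M] (π : Set ℕ) (a : M) : Prop :=
  ∀ p : ℕ, p.Prime → p ∣ (gammaR a).ncard → p ∈ π

/-- The monoid `Š` of functions `f : S → S` (written on the right, composed left to right)
such that `f(s) ≤_R s`, `f` preserves `L`-equivalence, and there is a right multiplier
`s_f ∈ S¹` with `f(s) R s → f(s) = s·s_f`. -/
def Scheck (S : Type*) [Semigroup S] : Set (S → S) :=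
  {f | (∀ s, leR (f s) s) ∧ (∀ s s', eqL s s' → eqL (f s) (f s')) ∧
       ∃ sf : Option S, ∀ s, eqR (f s) s → f s = hmul s sf}

/-- Strings `(x_n, …, x_1)` over `S` are encoded as lists `[x_1, …, x_n]` read first letter
first; concatenation of strings `b⃗·a⃗` is the list `a ++ b`.  The section (state) `_a F` of a
sequential function `F` at the word `a`. -/
def sect {S : Type*} (F : List S → List S) (a : List S) : List S → List S :=
  fun b => (F (a ++ b)).drop a.length

/-- Membership in the action monoid of the infinite iterated wreath product `≀^∞ (S, Š)`:
`F` is length-preserving, sequential (prefix-compatible), and each letter is transformed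
according to an element of `Š` (the wreath recursion). -/
def InWr {S : Type*} [Semigroup S] (F : List S → List S) : Prop :=
  (∀ l, (F l).length = l.length) ∧
  (∀ a b : List S, ∃ c, F (a ++ b) = F a ++ c) ∧
  (∀ a : List S, ∃ f ∈ Scheck S, ∀ s : S, sect F a [s] = [f s])

/-- The defining condition of `Š₀^∞`: whenever the top two letters `x_{n-1}, x_n` (the last two
entries of the list) are `R`-equivalent to their images, a single element `s ∈ S¹` realizes
both as right translations. -/
def Zeiger0 {S : Type*} [Semigroup S] (F : List S → List S) : Prop :=
  ∀ (t t' : List S) (xm xn ym yn : S), F (t ++ [xm, xn]) = t' ++ [ym, yn] →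
    t'.length = t.length → eqR xm ym → eqR xn yn →
    ∃ s : Option S, hmul xm s = ym ∧ hmul xn s = yn

/-- The submonoid `Š₀^∞` of the infinite iterated wreath product. -/
def Swr0 (S : Type*) [Semigroup S] : Set (List S → List S) :=
  {F | InWr F ∧ Zeiger0 F}


section Helpers
variable {S : Type*} [Semigroup S]

lemma leR_refl (a : S) : leR a a := Or.inl rfl

lemma leR_trans {a b c : S} (h1 : leR a b) (h2 : leR b c) : leR a c := by
  rcases h1 with rfl | ⟨u, rfl⟩ <;> rcases h2 with rfl | ⟨v, rfl⟩
  · exact Or.inl rfl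
  · exact Or.inr ⟨v, rfl⟩
  · exact Or.inr ⟨u, rfl⟩
  · exact Or.inr ⟨v * u, mul_assoc _ _ _⟩

lemma eqR_refl (a : S) : eqR a a := ⟨leR_refl a, leR_refl a⟩

lemma hmul_omul (s : S) (a b : Option S) : hmul (hmul s a) b = hmul s (omul a b) := by
  cases a <;> cases b <;> simp [hmul, omul, mul_assoc]

lemma Scheck_id : (id : S → S) ∈ Scheck S := by
  refine ⟨fun s => leR_refl s, fun s s' h => h, none, fun s _ => rfl⟩

lemma Scheck_comp {f g : S → S} (hf : f ∈ Scheck S) (hg : g ∈ Scheck S) :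
    (fun s => g (f s)) ∈ Scheck S := by
  obtain ⟨hf1, hf2, sf, hf3⟩ := hf
  obtain ⟨hg1, hg2, sg, hg3⟩ := hg
  refine ⟨fun s => leR_trans (hg1 (f s)) (hf1 s), fun s s' h => hg2 _ _ (hf2 _ _ h),
    omul sf sg, fun s hs => ?_⟩
  have hfs : eqR (f s) s := ⟨hf1 s, leR_trans hs.2 (hg1 (f s))⟩
  have hgs : eqR (g (f s)) (f s) := ⟨hg1 (f s), leR_trans hfs.1 hs.2⟩
  show g (f s) = hmul s (omul sf sg)
  rw [hg3 _ hgs, hf3 _ hfs, hmul_omul]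

lemma InWr.take {F : List S → List S} (h : InWr F) (a b : List S) :
    (F (a ++ b)).take a.length = F a := by
  obtain ⟨c, hc⟩ := h.2.1 a b
  rw [hc, List.take_append_of_le_length (by rw [h.1 a])]
  exact List.take_of_length_le (by rw [h.1 a])

lemma InWr.decomp {F : List S → List S} (h : InWr F) (a b : List S) :
    F (a ++ b) = F a ++ (F (a ++ b)).drop a.length := by
  conv_lhs => rw [← List.take_append_drop a.length (F (a ++ b)), h.take a b]

lemma InWr.letter {F : List S → List S} (h : InWr F) (a : List S) :
    ∃ f ∈ Scheck S, ∀ s : S, F (a ++ [s]) = F a ++ [f s] := by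
  obtain ⟨f, hf, hfs⟩ := h.2.2 a
  exact ⟨f, hf, fun s => by rw [h.decomp a [s]]; rw [show (F (a ++ [s])).drop a.length = sect F a [s] from rfl, hfs]⟩

lemma append_pair_inj {t t' : List S} {a b a' b' : S}
    (h : t ++ [a, b] = t' ++ [a', b']) (hl : t'.length = t.length) :
    t = t' ∧ a = a' ∧ b = b' := by
  obtain ⟨h1, h2⟩ := List.append_inj h (by omega)
  simp only [List.cons.injEq, and_true] at h2
  exact ⟨h1, h2.1, h2.2⟩

end Helpers

/-- `Š₀^∞` is a self-similar submonoid of the infinite iterated wreath product `≀^∞ (S, Š)`: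
it contains the identity, is closed under (left-to-right) composition, and is closed under
taking sections `_a F` for every word `a ∈ S^*`. -/


theorem stmt_11 {S : Type*} [Semigroup S] [Fintype S] :
    (id ∈ Swr0 S) ∧
    (∀ F G : List S → List S, F ∈ Swr0 S → G ∈ Swr0 S → (fun l => G (F l)) ∈ Swr0 S) ∧
    (∀ F : List S → List S, F ∈ Swr0 S → ∀ a : List S, sect F a ∈ Swr0 S) := by
  refine ⟨⟨⟨fun l => rfl, fun a b => ⟨b, rfl⟩, fun a => ⟨id, Scheck_id, fun s => ?_⟩⟩, ?_⟩, ?_, ?_⟩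
  · simp [sect]
  · -- Zeiger0 id
    intro t t' xm xn ym yn h hl _ _
    obtain ⟨-, h1, h2⟩ := append_pair_inj h hl
    exact ⟨none, by simp [hmul, h1, h2]⟩
  · -- composition
    rintro F G ⟨hF, hF0⟩ ⟨hG, hG0⟩
    constructor
    · refine ⟨fun l => by rw [hG.1, hF.1], fun a b => ?_, fun a => ?_⟩
      · obtain ⟨c, hc⟩ := hF.2.1 a b
        obtain ⟨d, hd⟩ := hG.2.1 (F a) c
        exact ⟨d, by show G (F (a ++ b)) = G (F a) ++ d; rw [hc, hd]⟩
      · obtain ⟨f, hf, hfl⟩ := hF.letter a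
        obtain ⟨g, hg, hgl⟩ := hG.letter (F a)
        refine ⟨fun s => g (f s), Scheck_comp hf hg, fun s => ?_⟩
        show (G (F (a ++ [s]))).drop a.length = _
        rw [hfl, hgl, List.drop_append_of_le_length (by rw [hG.1, hF.1]),
          List.drop_of_length_le (by rw [hG.1, hF.1])]
        simp
    · intro t t' xm xn ym yn h hl hm hn
      obtain ⟨f, hf, hfl⟩ := hF.letter t
      obtain ⟨f', hf', hfl'⟩ := hF.letter (t ++ [xm])
      have hFt : F (t ++ [xm, xn]) = F t ++ [f xm, f' xn] := by
        have : t ++ [xm, xn] = (t ++ [xm]) ++ [xn] := by simp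
        rw [this, hfl', hfl]; simp
      obtain ⟨g, hg, hgl⟩ := hG.letter (F t)
      obtain ⟨g', hg', hgl'⟩ := hG.letter (F t ++ [f xm])
      have hGt : G (F t ++ [f xm, f' xn]) = G (F t) ++ [g (f xm), g' (f' xn)] := by
        have : F t ++ [f xm, f' xn] = (F t ++ [f xm]) ++ [f' xn] := by simp
        rw [this, hgl', hgl]; simp
      have h' : G (F t) ++ [g (f xm), g' (f' xn)] = t' ++ [ym, yn] := by
        rw [← hGt, ← hFt]; exact h
      have hlen : t'.length = (G (F t)).length := by rw [hG.1, hF.1, hl]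
      obtain ⟨hteq, hmeq, hneq⟩ := append_pair_inj h' hlen
      -- R-equivalences
      have hmz : eqR xm (f xm) :=
        ⟨leR_trans hm.1 (hmeq ▸ (hg.1 (f xm))), (hf.1 xm)⟩
      have hnz : eqR xn (f' xn) :=
        ⟨leR_trans hn.1 (hneq ▸ (hg'.1 (f' xn))), (hf'.1 xn)⟩
      obtain ⟨s, hs1, hs2⟩ := hF0 t (F t) xm xn (f xm) (f' xn) hFt (hF.1 t) hmz hnz
      have hmz' : eqR (f xm) ym := ⟨leR_trans (hf.1 xm) hm.1, hmeq ▸ hg.1 (f xm)⟩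
      have hnz' : eqR (f' xn) yn := ⟨leR_trans (hf'.1 xn) hn.1, hneq ▸ hg'.1 (f' xn)⟩
      obtain ⟨s', hs1', hs2'⟩ := hG0 (F t) t' (f xm) (f' xn) ym yn
        (by rw [hGt, hteq, hmeq, hneq]) (hlen.trans (hG.1 (F t))) hmz' hnz'
      exact ⟨omul s s', by rw [← hmul_omul, hs1, hs1'], by rw [← hmul_omul, hs2, hs2']⟩
  · -- sections
    rintro F ⟨hF, hF0⟩ a
    have sect_sect : ∀ b : List S, sect (sect F a) b = sect F (a ++ b) := by
      intro b
      funext c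
      show ((F (a ++ (b ++ c))).drop a.length).drop b.length = (F ((a ++ b) ++ c)).drop (a ++ b).length
      rw [List.drop_drop, ← List.append_assoc, List.length_append, Nat.add_comm]
    constructor
    · refine ⟨fun l => ?_, fun b c => ?_, fun b => ?_⟩
      · show ((F (a ++ l)).drop a.length).length = l.length
        simp [hF.1]
      · obtain ⟨d, hd⟩ := hF.2.1 (a ++ b) c
        refine ⟨d, ?_⟩
        show (F (a ++ (b ++ c))).drop a.length = (F (a ++ b)).drop a.length ++ d
        rw [← List.append_assoc, hd, List.drop_append_of_le_length (by rw [hF.1]; simp)]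
      · obtain ⟨f, hf, hfs⟩ := hF.2.2 (a ++ b)
        exact ⟨f, hf, fun s => by rw [sect_sect b, hfs]⟩
    · intro t t' xm xn ym yn h hl hm hn
      have key : F ((a ++ t) ++ [xm, xn])
          = ((F ((a ++ t) ++ [xm, xn])).take a.length ++ t') ++ [ym, yn] := by
        rw [List.append_assoc, hF.take a (t ++ [xm, xn])]
        conv_lhs => rw [hF.decomp a (t ++ [xm, xn])]
        have hdr : (F (a ++ (t ++ [xm, xn]))).drop a.length = t' ++ [ym, yn] := h
        rw [hdr, List.append_assoc]
      have hlen2 : ((F ((a ++ t) ++ [xm, xn])).take a.length ++ t').length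
          = (a ++ t).length := by
        simp only [List.length_append, List.length_take, hF.1, hl]
        simp only [List.length_append, List.length_cons]
        omega
      obtain ⟨s, hs1, hs2⟩ := hF0 (a ++ t) _ xm xn ym yn key hlen2 hm hn
      exact ⟨s, hs1, hs2⟩
end

section
/- Let S be a finite semigroup with a blowup operator B (an idempotent preblowup operator). Then: (1) B ∈ Š, i.e., B(s) ≤_R s for all s, B preserves L-equivalence, and B(s) R s implies B(s) = s; (2) the image of B equals the set of π'-free elements of S; (3) if y ≤_L s then y ⊆ y·m_s; (4) if s is π'-free and y ≤_L s then y = y·m_s. -/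
open Pointwise

/-- A preblowup operator on a finite semigroup `S` realized as a subsemigroup of `P(T)` via an
injective semigroup embedding `ι : S → Set T`. -/
def IsPreblowupE (π : Set ℕ) {T : Type*} {S : Type*} [Semigroup T] [Semigroup S]
    (ι : S → Set T) (B : S → S) (m : S → Option S) : Prop :=
  (∀ s, piFree π s → B s = s) ∧
  (∀ s, ¬ piFree π s → ltH (B s) s) ∧
  (∀ s, ι s ⊆ ι (B s)) ∧
  (∀ s, B s = hmul s (m s)) ∧
  (∀ s s', eqL s s' → m s = m s')

section AuxLemmas

variable {M : Type*} [Semigroup M]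

lemma hmul_mul_left (u s : M) (x : Option M) : hmul (u * s) x = u * hmul s x := by
  cases x <;> simp [hmul, mul_assoc]

lemma leR_hmul (s : M) (x : Option M) : leR (hmul s x) s := by
  cases x with
  | none => exact Or.inl rfl
  | some a => exact Or.inr ⟨a, rfl⟩

lemma eqH_refl (a : M) : eqH a a :=
  ⟨⟨Or.inl rfl, Or.inl rfl⟩, ⟨Or.inl rfl, Or.inl rfl⟩⟩

lemma mpow_succ (u : M) {n : ℕ} (hn : 1 ≤ n) : mpow u (n + 1) = mpow u n * u := by
  obtain ⟨k, rfl⟩ : ∃ k, n = k + 1 := ⟨n - 1, by omega⟩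
  rfl

lemma mpow_add (u : M) {m n : ℕ} (hm : 1 ≤ m) (hn : 1 ≤ n) :
    mpow u (m + n) = mpow u m * mpow u n := by
  induction n, hn using Nat.le_induction with
  | base => rw [mpow_succ u hm]; rfl
  | succ n hn ih =>
      rw [show m + (n + 1) = (m + n) + 1 from rfl, mpow_succ u (by omega), ih,
        mpow_succ u hn, mul_assoc]

lemma mpow_period (u : M) {i p : ℕ} (hp : 1 ≤ p)
    (h : mpow u (i + 1) = mpow u (i + 1 + p)) :
    ∀ N, i + 1 ≤ N → ∀ k, mpow u (N + k * p) = mpow u N := by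
  have step : ∀ N, i + 1 ≤ N → mpow u (N + p) = mpow u N := by
    intro N hN
    obtain ⟨d, rfl⟩ : ∃ d, N = i + 1 + d := ⟨N - (i + 1), by omega⟩
    rcases Nat.eq_zero_or_pos d with hd | hd
    · subst hd; exact h.symm
    · have h1 : mpow u (i + 1 + d + p) = mpow u (i + 1 + p) * mpow u d := by
        rw [show i + 1 + d + p = (i + 1 + p) + d by omega]
        exact mpow_add u (by omega) hd
      rw [h1, ← h, ← mpow_add u (by omega) hd]
  intro N hN k
  induction k with
  | zero => simp
  | succ k ih =>
      rw [show N + (k + 1) * p = (N + k * p) + p by ring, step _ (by omega), ih]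

lemma exists_idem_pow [Finite M] (u : M) :
    ∃ N, 2 ≤ N ∧ mpow u N * mpow u N = mpow u N := by
  obtain ⟨x, y, hxy, hf⟩ := Finite.exists_ne_map_eq_of_infinite (fun n => mpow u (n + 1))
  -- normalize to i < j
  obtain ⟨i, j, hij, hmem⟩ : ∃ i j, i < j ∧ mpow u (i + 1) = mpow u (j + 1) := by
    rcases Nat.lt_or_ge x y with h | h
    · exact ⟨x, y, h, hf⟩
    · exact ⟨y, x, lt_of_le_of_ne h (Ne.symm hxy), hf.symm⟩
  set p := j - i with hpdef
  have hp : 1 ≤ p := by omega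
  have hper : mpow u (i + 1) = mpow u (i + 1 + p) := by
    rw [show i + 1 + p = j + 1 by omega]; exact hmem
  set n := (i + 1) * p with hndef
  have hn1 : 1 ≤ n := Nat.mul_pos (Nat.succ_pos i) hp
  have hni : i + 1 ≤ n := by
    calc i + 1 = (i + 1) * 1 := by ring
    _ ≤ (i + 1) * p := Nat.mul_le_mul_left _ hp
  have hidem : mpow u n * mpow u n = mpow u n := by
    rw [← mpow_add u hn1 hn1, show n + n = n + (i + 1) * p from rfl,
      mpow_period u hp hper n hni (i + 1)]
  refine ⟨n + n, by omega, ?_⟩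
  have h2 : mpow u (n + n) = mpow u n := by rw [mpow_add u hn1 hn1, hidem]
  rw [h2, hidem]

/-- Stability: in a finite semigroup, if `a = u * b` and `b = a * v` then `b ≤_L a`. -/
lemma leL_of_stab [Finite M] {a b u v : M} (ha : a = u * b) (hb : b = a * v) :
    leL b a := by
  have hbv : b = u * b * v := by rw [ha] at hb; exact hb
  have key : ∀ n, 1 ≤ n → b = mpow u n * b * mpow v n := by
    intro n hn
    induction n, hn using Nat.le_induction with
    | base => exact hbv
    | succ n hn ih =>
        have hu : mpow u (n + 1) = u * mpow u n := by
          rw [show n + 1 = 1 + n by omega, mpow_add u le_rfl hn]; rfl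
        have hv : mpow v (n + 1) = mpow v n * v := mpow_succ v hn
        calc b = u * b * v := hbv
        _ = u * (mpow u n * b * mpow v n) * v := by rw [← ih]
        _ = mpow u (n + 1) * b * mpow v (n + 1) := by
            rw [hu, hv]; simp only [mul_assoc]
  obtain ⟨N, hN2, hNi⟩ := exists_idem_pow u
  have hb' := key N (by omega)
  set e := mpow u N with he
  have heb : e * b = b := by
    calc e * b = e * (e * b * mpow v N) := by rw [← hb']
    _ = (e * e) * b * mpow v N := by simp only [mul_assoc]
    _ = e * b * mpow v N := by rw [hNi]
    _ = b := hb'.symm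
  have hsplit : mpow u N = mpow u (N - 1) * u := by
    have h := mpow_succ u (n := N - 1) (by omega)
    rwa [show N - 1 + 1 = N by omega] at h
  exact Or.inr ⟨mpow u (N - 1), by rw [← heb, he, hsplit, mul_assoc, ← ha]⟩

end AuxLemmas

/-- Properties of a blowup operator `B` (an idempotent preblowup operator) on a finite
semigroup `S ⊆ P(T)`: (1) `B ∈ Š` — `B(s) ≤_R s`, `B` preserves `L`, and `B(s) R s` implies
`B(s) = s`; (2) the image of `B` is the set of `π'`-free elements; (3) `y ≤_L s` implies
`y ⊆ y·m_s`; (4) if `s` is `π'`-free and `y ≤_L s` then `y = y·m_s`. -/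
theorem stmt_13 (π : Set ℕ) {T S : Type*} [Semigroup T] [Fintype T] [Semigroup S] [Fintype S]
    (ι : S → Set T) (hιinj : Function.Injective ι) (hιmul : ∀ a b, ι (a * b) = ι a * ι b)
    (B : S → S) (m : S → Option S) (hpre : IsPreblowupE π ι B m)
    (hidem : ∀ s, B (B s) = B s) :
    ((∀ s, leR (B s) s) ∧ (∀ s s', eqL s s' → eqL (B s) (B s')) ∧
      (∀ s, eqR (B s) s → B s = s)) ∧
    (Set.range B = {s | piFree π s}) ∧
    (∀ y s, leL y s → ι y ⊆ ι (hmul y (m s))) ∧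
    (∀ y s, piFree π s → leL y s → y = hmul y (m s)) := by
  obtain ⟨h1, h2, h3, h4, h5⟩ := hpre
  refine ⟨⟨?_, ?_, ?_⟩, ?_, ?_, ?_⟩
  · -- B s ≤_R s
    intro s
    rw [h4 s]; exact leR_hmul s (m s)
  · -- B preserves L
    have key : ∀ a b : S, m a = m b → leL a b → leL (B a) (B b) := by
      intro a b hmab hab
      rcases hab with rfl | ⟨u, rfl⟩
      · exact Or.inl rfl
      · exact Or.inr ⟨u, by rw [h4 (u * b), h4 b, hmab, hmul_mul_left]⟩
    intro s s' hL
    have hm : m s = m s' := h5 s s' hL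
    exact ⟨key s s' hm hL.1, key s' s hm.symm hL.2⟩
  · -- B s R s → B s = s
    intro s hR
    by_cases hπ : piFree π s
    · exact h1 s hπ
    · obtain ⟨hL, _, hne⟩ := h2 s hπ
      rcases hL with hEq | ⟨u, hu⟩
      · exact hEq
      · rcases hR.2 with hEq | ⟨v, hv⟩
        · exact hEq.symm
        · have hsL : leL s (B s) := leL_of_stab hu hv
          exact absurd ⟨⟨Or.inr ⟨u, hu⟩, hsL⟩, hR⟩ hne
  · -- range B = π'-free elements
    ext s
    constructor
    · rintro ⟨t, rfl⟩
      by_contra hn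
      obtain ⟨_, _, hne⟩ := h2 (B t) hn
      rw [hidem t] at hne
      exact hne (eqH_refl (B t))
    · intro hs
      exact ⟨s, h1 s hs⟩
  · -- y ≤_L s → ι y ⊆ ι (hmul y (m s))
    intro y s hy
    rcases hy with rfl | ⟨u, rfl⟩
    · have := h3 y; rwa [h4 y] at this
    · rw [hmul_mul_left, hιmul, hιmul]
      have := h3 s; rw [h4 s] at this
      exact Set.mul_subset_mul_left this
  · -- π'-free s, y ≤_L s → y = hmul y (m s)
    intro y s hs hy
    have hBs : hmul s (m s) = s := by rw [← h4 s, h1 s hs]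
    rcases hy with rfl | ⟨u, rfl⟩
    · exact hBs.symm
    · rw [hmul_mul_left, hBs]
end

section
/- Let S be a finite semigroup with blowup operator B and multipliers m_s, and define B̂ : S^* → S^* recursively by B̂(ε) = ε and B̂(b⃗·s) = B̂(b⃗·Δ_{m_s}) · B(s), where Δ_u multiplies each coordinate on the right by u. Then for any L-chain (x_n,…,x_1), writing B̂(x_n,…,x_1) = (y_n,…,y_1), we have x_i ⊆ y_i for all i. -/
open Pointwise

/-- An `L`-chain `(s_n, …, s_1)` (with `s_{i+1} ≤_L s_i`), encoded as the list
`[s_1, s_2, …, s_n]` whose head is the first (rightmost) letter. -/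
def isChain {S : Type*} [Mul S] (l : List S) : Prop := List.Chain' (fun a b => leL b a) l

/-- A flag: a strict `L`-chain. -/
def isFlag {S : Type*} [Mul S] (l : List S) : Prop :=
  List.Chain' (fun a b => leL b a ∧ ¬ leL a b) l

/-- Elementary reduction `(…, s', s, …) → (…, s', …)` when `s' L s`: delete the earlier-read
entry `s` of two adjacent `L`-equivalent entries, keeping `s'`. -/
def rstep {S : Type*} [Mul S] (l l' : List S) : Prop :=
  ∃ (l₁ : List S) (s s' : S) (l₂ : List S),
    eqL s' s ∧ l = l₁ ++ s :: s' :: l₂ ∧ l' = l₁ ++ s' :: l₂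

/-- Henckell's formula: `B̂(ε) = ε`, `B̂(b⃗·s) = B̂(b⃗Δ_{m_s}) · B(s)`, where strings
`(x_n, …, x_1)` are encoded as lists `[x_1, …, x_n]` (head = rightmost letter) and
`Δ_u` multiplies every coordinate on the right by `u ∈ S¹`. -/
def Bhat {S : Type*} [Semigroup S] (B : S → S) (m : S → Option S) : List S → List S
  | [] => []
  | s :: b => B s :: Bhat B m (b.map (fun x => hmul x (m s)))
termination_by l => l.length
decreasing_by simp

/-! If `x ≤_L s`, say `x = v s`, then `ι x = ι v · ι s ⊆ ι v · ι (s m_s) = ι (x m_s)`, because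
`s ⊆ B(s) = s m_s`. So `Δ_{m_s}` enlarges every letter of an `L`-chain headed by `s`, and it
maps `L`-chains to `L`-chains; induction on the length gives `x_i ⊆ x_i m_s ⊆ y_i`. -/

theorem mul_hmul {M : Type*} [Semigroup M] (a b : M) (u : Option M) :
    hmul (a * b) u = a * hmul b u := by
  cases u <;> simp [hmul, mul_assoc]

theorem leL_trans {M : Type*} [Semigroup M] {a b c : M} (hab : leL a b) (hbc : leL b c) :
    leL a c := by
  rcases hab with rfl | ⟨u, rfl⟩
  · exact hbc
  rcases hbc with rfl | ⟨v, rfl⟩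
  · exact Or.inr ⟨u, rfl⟩
  · exact Or.inr ⟨u * v, (mul_assoc u v c).symm⟩

theorem leL.hmul_right {M : Type*} [Semigroup M] {a b : M} (h : leL a b) (u : Option M) :
    leL (hmul a u) (hmul b u) := by
  rcases h with rfl | ⟨v, rfl⟩
  · exact Or.inl rfl
  · exact Or.inr ⟨v, mul_hmul v b u⟩

theorem isChain.map_hmul {M : Type*} [Semigroup M] {l : List M} (hl : isChain l)
    (u : Option M) : isChain (l.map (hmul · u)) :=
  List.isChain_map_of_isChain _ (fun _ _ h => h.hmul_right u) hl

theorem isChain.leL_head {M : Type*} [Semigroup M] {s : M} {l : List M}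
    (hl : isChain (s :: l)) : ∀ x ∈ l, leL x s :=
  have : IsTrans M (fun a b => leL b a) := ⟨fun _ _ _ hab hbc => leL_trans hbc hab⟩
  (List.pairwise_cons.mp (List.isChain_iff_pairwise.mp hl)).1

theorem subset_hmul_of_leL {T S : Type*} [Semigroup T] [Semigroup S] {ι : S → Set T}
    (hιmul : ∀ a b, ι (a * b) = ι a * ι b) {s x : S} {u : Option S}
    (hs : ι s ⊆ ι (hmul s u)) (hx : leL x s) : ι x ⊆ ι (hmul x u) := by
  rcases hx with rfl | ⟨v, rfl⟩
  · exact hs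
  · rw [mul_hmul, hιmul, hιmul]
    exact Set.mul_subset_mul_left hs

theorem forall₂_subset_Bhat {T S : Type*} [Semigroup T] [Semigroup S] {ι : S → Set T}
    (hιmul : ∀ a b, ι (a * b) = ι a * ι b) {B : S → S} {m : S → Option S}
    (hB : ∀ s, ι s ⊆ ι (B s)) (hBm : ∀ s, B s = hmul s (m s)) :
    ∀ l : List S, isChain l → List.Forall₂ (fun x y => ι x ⊆ ι y) l (Bhat B m l)
  | [], _ => by simp [Bhat]
  | s :: b, hl => by
    rw [Bhat]
    refine .cons (hB s) ?_
    have ih := forall₂_subset_Bhat hιmul hB hBm _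
      (isChain.map_hmul (List.IsChain.tail hl) (m s))
    rw [List.forall₂_map_left_iff] at ih
    refine ((List.forall₂_and_left _ _).mpr ⟨hl.leL_head, ih⟩).imp fun x _ ⟨hxs, hx⟩ => ?_
    exact (subset_hmul_of_leL hιmul (hBm s ▸ hB s) hxs).trans hx
termination_by l => l.length

theorem stmt_14_general (π : Set ℕ) {T S : Type*} [Semigroup T] [Semigroup S]
    (ι : S → Set T) (hιmul : ∀ a b, ι (a * b) = ι a * ι b)
    (B : S → S) (m : S → Option S) (hpre : IsPreblowupE π ι B m)
    (l : List S) (hl : isChain l) :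
    List.Forall₂ (fun x y => ι x ⊆ ι y) l (Bhat B m l) :=
  forall₂_subset_Bhat hιmul hpre.2.2.1 hpre.2.2.2.1 l hl

/-- `B̂` blows up `L`-chains: if `B` is a blowup operator (idempotent preblowup operator) on
the finite semigroup `S ⊆ P(T)` with multipliers `m`, and `(x_n, …, x_1)` is an `L`-chain with
`B̂(x_n, …, x_1) = (y_n, …, y_1)`, then `x_i ⊆ y_i` for all `i`. -/
theorem stmt_14 (π : Set ℕ) {T S : Type*} [Semigroup T] [Fintype T] [Semigroup S] [Fintype S]
    (ι : S → Set T) (hιinj : Function.Injective ι) (hιmul : ∀ a b, ι (a * b) = ι a * ι b)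
    (B : S → S) (m : S → Option S) (hpre : IsPreblowupE π ι B m)
    (hidem : ∀ s, B (B s) = B s) (l : List S) (hl : isChain l) :
    List.Forall₂ (fun x y => ι x ⊆ ι y) l (Bhat B m l) :=
  stmt_14_general π ι hιmul B m hpre l hl
end
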